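/- arXiv:1404.4647 — 2 statements merged into one kernel-verified Lean document; each statement's English description precedes it below -/
import Mathlib

section
/- Let W be a Coxeter group with simple reflections S, let α ∈ S, and let N(α) be the set of simple reflections t ∈ S with t ≠ α that do not commute with α. Let S_P = S \ {α} and S_R = S \ (N(α) ∪ {α}). Then for every w ∈ W_P that is a minimal-length representative with respect to W_R (i.e., l(wt) > l(w) for all t ∈ S_R), the element w·α satisfies l(w·α·t) > l(w·α) for all t ∈ S_P. In other words, W_P^R · α ⊆ W^P. -/
/-!
Let `W_A` be the subgroup generated by the `s b` with `b ∈ A`, where `α ∉ A`. In the geometric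
representation `W_A` preserves the `α`-coordinate of every vector, whereas `s α` sends that of
`e α` to `-1` and, when `s i` does not commute with `s α`, `s α * s i * s α` sends it to
`1 - 4 B(α, i)²` with `B(α, i) ≠ 0`; so neither element lies in `W_A`.

The exchange condition then gives `ℓ v < ℓ (v * s α)` for `v ∈ W_A`. If
`ℓ (w * s α * s i) < ℓ (w * s α)` and `s i` does not commute with `s α`, it writes
`w * s α * s i` as the product of a subword of `ω ++ [α]`, `ω` a word in `A` for `w`, which puts
`s α` or `s α * s i * s α` into `W_A`. If `s i` commutes with `s α`, the minimality of `w` gives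
`ℓ (w * s α * s i) = ℓ (w * s i * s α) = ℓ w + 2` instead.
-/

open CoxeterSystem

namespace CoxeterMatrix

open Real

variable {B : Type*} (M : CoxeterMatrix B)

/-- `M i j = 0` encodes `m = ∞`; then `π / 0 = 0` makes the entry `-cos 0 = -1`, the usual value
for `m = ∞`. -/
noncomputable def geomCoeff (i j : B) : ℝ := -cos (π / M i j)

noncomputable def geomFunctional (i : B) : (B →₀ ℝ) →ₗ[ℝ] ℝ :=
  Finsupp.linearCombination ℝ (M.geomCoeff i)

noncomputable def geomReflection (i : B) : Module.End ℝ (B →₀ ℝ) :=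
  LinearMap.id - (2 • M.geomFunctional i).smulRight (Finsupp.single i 1)

lemma geomCoeff_self (i : B) : M.geomCoeff i i = 1 := by
  simp [geomCoeff]

lemma geomCoeff_comm (i j : B) : M.geomCoeff i j = M.geomCoeff j i := by
  rw [geomCoeff, geomCoeff, M.symmetric]

@[simp]
lemma geomFunctional_single (i j : B) (a : ℝ) :
    M.geomFunctional i (Finsupp.single j a) = a * M.geomCoeff i j := by
  simp [geomFunctional]

lemma geomReflection_apply (i : B) (v : B →₀ ℝ) :
    M.geomReflection i v = v - (2 * M.geomFunctional i v) • Finsupp.single i 1 := by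
  simp [geomReflection]

lemma geomReflection_geomReflection (i : B) (v : B →₀ ℝ) :
    M.geomReflection i (M.geomReflection i v) = v := by
  simp only [geomReflection_apply, map_sub, map_smul, geomFunctional_single, geomCoeff_self]
  module

/-- On the plane spanned by `e i` and `e j` the product of the two reflections is the rotation by
`2θ`: it shifts the parameter of this curve by `2θ`. -/
lemma geomReflection_mul_apply_sin {i j : B} {θ : ℝ} (hθ : M.geomCoeff i j = -cos θ) (x : ℝ) :
    (M.geomReflection i * M.geomReflection j)
        (sin (x + θ) • Finsupp.single i 1 + sin x • Finsupp.single j 1) =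
      sin (x + 2 * θ + θ) • Finsupp.single i 1 + sin (x + 2 * θ) • Finsupp.single j 1 := by
  have hθ' : M.geomCoeff j i = -cos θ := M.geomCoeff_comm i j ▸ hθ
  have key : ∀ y, sin (y + θ) = 2 * cos θ * sin y - sin (y - θ) := fun y => by
    rw [sin_add, sin_sub]; ring
  have h₁ := key (x + θ)
  rw [add_sub_cancel_right, add_assoc, ← two_mul] at h₁
  have h₂ := key (x + 2 * θ)
  rw [show x + 2 * θ - θ = x + θ by ring] at h₂
  simp only [Module.End.mul_apply, geomReflection_apply, map_add, map_sub, map_smul,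
    geomFunctional_single, geomCoeff_self, hθ, hθ', h₁, h₂]
  module

lemma geomReflection_mul_pow_apply_sin {i j : B} {θ : ℝ} (hθ : M.geomCoeff i j = -cos θ)
    (n : ℕ) (x : ℝ) :
    ((M.geomReflection i * M.geomReflection j) ^ n)
        (sin (x + θ) • Finsupp.single i 1 + sin x • Finsupp.single j 1) =
      sin (x + n * (2 * θ) + θ) • Finsupp.single i 1 +
        sin (x + n * (2 * θ)) • Finsupp.single j 1 := by
  induction n with
  | zero => simp
  | succ n ih =>
    rw [pow_succ', Module.End.mul_apply, ih, geomReflection_mul_apply_sin M hθ]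
    push_cast
    ring_nf

lemma geomReflection_mul_pow_apply_single {i j : B} {θ : ℝ} (hθ : M.geomCoeff i j = -cos θ)
    (hs : sin θ ≠ 0) {n : ℕ} (hn : n * θ = π) :
    ((M.geomReflection i * M.geomReflection j) ^ n) (Finsupp.single i 1) =
        Finsupp.single i 1 ∧
      ((M.geomReflection i * M.geomReflection j) ^ n) (Finsupp.single j 1) =
        Finsupp.single j 1 := by
  have h2π : (n : ℝ) * (2 * θ) = 2 * π := by rw [mul_left_comm, hn]
  have hi := M.geomReflection_mul_pow_apply_sin hθ n 0
  have hj := M.geomReflection_mul_pow_apply_sin hθ n (-θ)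
  rw [h2π] at hi hj
  simp only [zero_add, sin_zero, zero_smul, add_zero, add_comm (2 * π), sin_add_two_pi,
    sin_two_pi, neg_add_cancel, ← sub_eq_neg_add, sub_add_cancel, sin_two_pi_sub, sin_neg,
    map_smul] at hi hj
  exact ⟨smul_right_injective _ hs hi, smul_right_injective _ (neg_ne_zero.2 hs) hj⟩

/-- The form is nondegenerate on the plane spanned by `e i` and `e j` (its Gram determinant is
`sin² θ`), so every vector splits into a part in that plane and a part fixed by both
reflections. -/
lemma exists_geomFunctional_sub_eq_zero {i j : B} {θ : ℝ} (hθ : M.geomCoeff i j = -cos θ)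
    (hs : sin θ ≠ 0) (v : B →₀ ℝ) :
    ∃ p q : ℝ,
      M.geomFunctional i (v - p • Finsupp.single i 1 - q • Finsupp.single j 1) = 0 ∧
      M.geomFunctional j (v - p • Finsupp.single i 1 - q • Finsupp.single j 1) = 0 := by
  have hθ' : M.geomCoeff j i = -cos θ := M.geomCoeff_comm i j ▸ hθ
  have hdet : 1 - cos θ ^ 2 ≠ 0 := by rw [← sin_sq]; exact pow_ne_zero 2 hs
  set x := M.geomFunctional i v
  set y := M.geomFunctional j v
  refine ⟨(x + cos θ * y) / (1 - cos θ ^ 2), (y + cos θ * x) / (1 - cos θ ^ 2), ?_, ?_⟩ <;>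
  · simp only [map_sub, map_smul, geomFunctional_single, geomCoeff_self, hθ, hθ', smul_eq_mul]
    field_simp
    ring

lemma geomReflection_mul_pow (i j : B) :
    (M.geomReflection i * M.geomReflection j) ^ M i j = 1 := by
  rcases eq_or_ne i j with rfl | hij
  · refine LinearMap.ext fun v => ?_
    rw [M.diagonal, pow_one, Module.End.mul_apply, geomReflection_geomReflection,
      Module.End.one_apply]
  obtain hm | hm := (M i j).eq_zero_or_pos
  · rw [hm, pow_zero]
  have hm2 : (2 : ℝ) ≤ M i j := by
    have := M.off_diagonal i j hij
    exact_mod_cast (show 2 ≤ M i j by omega)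
  set θ := π / M i j with hθdef
  have hθ : M.geomCoeff i j = -cos θ := rfl
  have hmθ : (M i j : ℝ) * θ = π := by rw [hθdef]; field_simp
  have hs : sin θ ≠ 0 := by
    refine (sin_pos_of_pos_of_lt_pi (by positivity) ?_).ne'
    rw [hθdef, div_lt_iff₀ (by positivity)]
    nlinarith [pi_pos]
  obtain ⟨hi, hj⟩ := M.geomReflection_mul_pow_apply_single hθ hs hmθ
  refine LinearMap.ext fun v => ?_
  obtain ⟨p, q, hui, huj⟩ := M.exists_geomFunctional_sub_eq_zero hθ hs v
  set u := v - p • Finsupp.single i 1 - q • Finsupp.single j 1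
  have hu : (M.geomReflection i * M.geomReflection j) u = u := by
    rw [Module.End.mul_apply, geomReflection_apply M j, huj, mul_zero, zero_smul, sub_zero,
      geomReflection_apply M i, hui, mul_zero, zero_smul, sub_zero]
  have hv : v = u + p • Finsupp.single i 1 + q • Finsupp.single j 1 := by
    simp only [u]; abel
  rw [Module.End.one_apply, hv, map_add, map_add, map_smul, map_smul, hi, hj,
    Module.End.pow_apply, Function.iterate_fixed hu]

lemma isLiftable_geomReflection : M.IsLiftable M.geomReflection :=
  M.geomReflection_mul_pow

lemma eq_two_of_geomCoeff_eq_zero {i j : B} (h : M.geomCoeff i j = 0) : M i j = 2 := by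
  rw [geomCoeff, neg_eq_zero] at h
  obtain h0 | h1 | h2 | h3 : M i j = 0 ∨ M i j = 1 ∨ M i j = 2 ∨ 3 ≤ M i j := by omega
  · simp [h0] at h
  · simp [h1] at h
  · exact h2
  · refine absurd h (cos_pos_of_mem_Ioo ⟨?_, ?_⟩).ne'
    · linarith [pi_pos, show 0 < π / M i j by positivity]
    · rw [div_lt_div_iff_of_pos_left pi_pos (by positivity) two_pos]
      exact_mod_cast (show 2 < M i j by omega)

end CoxeterMatrix

lemma List.even_count_of_getElem_add_eq {α : Type*} [BEq α] {L : List α} {p : ℕ}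
    (hL : L.length = 2 * p) (h : ∀ k (hk : k < p), L[k + p] = L[k]) (a : α) :
    Even (L.count a) := by
  have hdrop : L.drop p = L.take p := List.ext_getElem (by simp; omega) fun k h₁ h₂ => by
    simpa [add_comm] using h k (by simp at h₂; omega)
  rw [← L.take_append_drop p, List.count_append, hdrop]
  exact ⟨_, rfl⟩

namespace CoxeterSystem

lemma prod_map_alternatingWord_two_mul {B G : Type*} [Monoid G] (f : B → G) (i j : B) (p : ℕ) :
    ((alternatingWord i j (2 * p)).map f).prod = (f i * f j) ^ p := by
  induction p with
  | zero => simp [alternatingWord]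
  | succ p ih =>
    rw [show 2 * (p + 1) = 2 * p + 1 + 1 by ring, alternatingWord_succ', alternatingWord_succ']
    simp [ih, pow_succ', mul_assoc]

variable {B : Type*} {M : CoxeterMatrix B} {W : Type*} [Group W] (cs : CoxeterSystem M W)

local prefix:100 "s" => cs.simple
local prefix:100 "π" => cs.wordProd
local prefix:100 "ris" => cs.rightInvSeq
local prefix:100 "lis" => cs.leftInvSeq
local prefix:100 "ℓ" => cs.length

lemma simple_mul_mul_simple_eq_simple_iff (i : B) (t : W) : s i * t * s i = s i ↔ t = s i := by
  constructor
  · intro h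
    simpa [mul_assoc] using congrArg (fun x => s i * x * s i) h
  · rintro rfl
    simp

section ReflectionCocycle

variable [DecidableEq W]

lemma even_count_leftInvSeq_alternatingWord (i j : B) (t : W) :
    Even ((lis (alternatingWord i j (2 * M i j))).count t) := by
  refine List.even_count_of_getElem_add_eq (p := M i j) (by simp) (fun k hk => ?_) t
  -- the `k`-th entry is `s i * (s j * s i) ^ k`
  rw [getElem_leftInvSeq_alternatingWord cs i j _ _ (by omega),
    getElem_leftInvSeq_alternatingWord cs i j _ _ (by omega), prod_alternatingWord_eq_mul_pow,
    prod_alternatingWord_eq_mul_pow, show (2 * (k + M i j) + 1) / 2 = k + M i j by omega,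
    show (2 * k + 1) / 2 = k by omega, pow_add, M.symmetric, simple_mul_simple_pow, mul_one]
  simp

/-- A word acting through these permutations records in `ε` the parity of the number of
occurrences of `t` in its right inversion sequence (`prod_map_reflectionPerm_apply`). They satisfy
the Coxeter relations, so this parity depends only on the product of the word. -/
def reflectionPerm (i : B) : Equiv.Perm (W × ZMod 2) :=
  Function.Involutive.toPerm (fun p ↦ (s i * p.1 * s i, p.2 + if p.1 = s i then 1 else 0))
    (by
      rintro ⟨t, ε⟩
      simp only [simple_mul_mul_simple_eq_simple_iff, Prod.mk.injEq]
      refine ⟨by simp [mul_assoc], ?_⟩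
      rw [add_assoc, CharTwo.add_self_eq_zero, add_zero])

@[simp]
lemma reflectionPerm_apply (i : B) (t : W) (ε : ZMod 2) :
    cs.reflectionPerm i (t, ε) = (s i * t * s i, ε + if t = s i then 1 else 0) :=
  rfl

lemma prod_map_reflectionPerm_apply (ω : List B) (t : W) (ε : ZMod 2) :
    (ω.map cs.reflectionPerm).prod (t, ε) = (π ω * t * (π ω)⁻¹, ε + (ris ω).count t) := by
  induction ω generalizing ε with
  | nil => simp
  | cons i ω ih =>
    have hconj : π ω * t * (π ω)⁻¹ = s i ↔ (π ω)⁻¹ * s i * π ω = t := by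
      rw [eq_comm, eq_mul_inv_iff_mul_eq, ← inv_mul_eq_iff_eq_mul, mul_assoc]
    simp only [List.map_cons, List.prod_cons, Equiv.Perm.mul_apply, ih, reflectionPerm_apply,
      wordProd_cons, rightInvSeq, List.count_cons, beq_iff_eq, hconj, Prod.mk.injEq]
    constructor
    · simp [mul_assoc]
    · push_cast
      ring

lemma isLiftable_reflectionPerm : M.IsLiftable cs.reflectionPerm := by
  intro i j
  have hinv : ∀ k, (cs.reflectionPerm k)⁻¹ = cs.reflectionPerm k := fun k =>
    Function.Involutive.toPerm_symm _
  set ω := alternatingWord i j (2 * M i j)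
  have hω : π ω = 1 := by
    rw [wordProd, prod_map_alternatingWord_two_mul, simple_mul_simple_pow]
  rw [← prod_map_alternatingWord_two_mul, ← inv_eq_one, List.prod_inv_reverse]
  simp only [List.map_map, Function.comp_def, hinv, ← List.map_reverse]
  refine Equiv.ext fun ⟨t, ε⟩ => ?_
  rw [prod_map_reflectionPerm_apply, wordProd_reverse, hω, rightInvSeq_reverse, List.count_reverse,
    (ZMod.natCast_eq_zero_iff_even).2 (cs.even_count_leftInvSeq_alternatingWord i j t)]
  simp

noncomputable def reflectionPermRep : W →* Equiv.Perm (W × ZMod 2) :=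
  cs.lift ⟨cs.reflectionPerm, cs.isLiftable_reflectionPerm⟩

lemma reflectionPermRep_wordProd (ω : List B) :
    cs.reflectionPermRep (π ω) = (ω.map cs.reflectionPerm).prod := by
  rw [wordProd, map_list_prod, List.map_map]
  congr 2
  ext1 i
  exact cs.lift_apply_simple cs.isLiftable_reflectionPerm i

lemma natCast_count_rightInvSeq_eq_of_wordProd_eq {ω ω' : List B} (h : π ω = π ω') (t : W) :
    ((ris ω).count t : ZMod 2) = (ris ω').count t := by
  have := congrArg (fun g => (cs.reflectionPermRep g (t, 0)).2) h
  simpa [reflectionPermRep_wordProd, prod_map_reflectionPerm_apply] using this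

end ReflectionCocycle

lemma simple_mem_rightInvSeq_of_length_mul_simple_lt {w : W} {i : B} (h : ℓ (w * s i) < ℓ w)
    {ω : List B} (hω : π ω = w) : s i ∈ ris ω := by
  classical
  obtain ⟨σ, hσ, hσw⟩ := cs.exists_isReduced (w * s i)
  have hσi : s i ∉ ris σ := fun hmem => by
    have := (cs.isRightInversion_of_mem_rightInvSeq hσ hmem).2
    rw [← hσw, mul_assoc, simple_mul_simple_self, mul_one] at this
    omega
  have hcount : (ris (σ.concat i)).count (s i) = 1 := by
    have hmap := List.count_map_of_injective (ris σ) _ (MulAut.conj (s i)).injective (s i)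
    rw [MulAut.conj_apply, inv_simple, simple_mul_simple_cancel_right] at hmap
    rw [rightInvSeq_concat, List.concat_eq_append, List.count_append, hmap,
      List.count_eq_zero.2 hσi, List.count_singleton_self]
  have hparity := cs.natCast_count_rightInvSeq_eq_of_wordProd_eq
    (show π ω = π (σ.concat i) by rw [wordProd_concat, ← hσw, hω, simple_mul_simple_cancel_right])
    (s i)
  rw [hcount] at hparity
  by_contra hn
  rw [List.count_eq_zero.2 hn] at hparity
  exact zero_ne_one hparity

/-- The exchange condition. -/
lemma exists_sublist_wordProd_eq_mul_simple {w : W} {i : B} (h : ℓ (w * s i) < ℓ w)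
    {ω : List B} (hω : π ω = w) : ∃ ω', ω'.Sublist ω ∧ π ω' = w * s i := by
  obtain ⟨j, hj, hget⟩ :=
    List.mem_iff_getElem.mp (cs.simple_mem_rightInvSeq_of_length_mul_simple_lt h hω)
  refine ⟨ω.eraseIdx j, List.eraseIdx_sublist _ _, ?_⟩
  rw [← wordProd_mul_getD_rightInvSeq, List.getD_eq_getElem _ _ hj, hget, hω]

lemma wordProd_mem_closure {A : Set B} {ω : List B} (h : ∀ b ∈ ω, b ∈ A) :
    π ω ∈ Subgroup.closure (cs.simple '' A) := by
  refine Subgroup.list_prod_mem _ fun x hx => ?_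
  obtain ⟨b, hb, rfl⟩ := List.mem_map.1 hx
  exact Subgroup.subset_closure ⟨b, h b hb, rfl⟩

lemma exists_wordProd_eq_of_mem_closure {A : Set B} {w : W}
    (hw : w ∈ Subgroup.closure (cs.simple '' A)) : ∃ ω : List B, (∀ b ∈ ω, b ∈ A) ∧ π ω = w := by
  induction hw using Subgroup.closure_induction with
  | mem x hx =>
    obtain ⟨b, hb, rfl⟩ := hx
    exact ⟨[b], by simpa using hb, cs.wordProd_singleton b⟩
  | one => exact ⟨[], by simp, cs.wordProd_nil⟩
  | mul x y _ _ ihx ihy =>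
    obtain ⟨ωx, hx, rfl⟩ := ihx
    obtain ⟨ωy, hy, rfl⟩ := ihy
    refine ⟨ωx ++ ωy, fun b hb => ?_, cs.wordProd_append ωx ωy⟩
    exact (List.mem_append.1 hb).elim (hx b) (hy b)
  | inv x _ ihx =>
    obtain ⟨ω, hω, rfl⟩ := ihx
    exact ⟨ω.reverse, fun b hb => hω b (List.mem_reverse.1 hb), cs.wordProd_reverse ω⟩

noncomputable def geomRep : W →* Module.End ℝ (B →₀ ℝ) :=
  cs.lift ⟨M.geomReflection, M.isLiftable_geomReflection⟩

lemma geomRep_simple (i : B) : cs.geomRep (s i) = M.geomReflection i :=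
  cs.lift_apply_simple M.isLiftable_geomReflection i

lemma geomRep_apply_apply_of_mem_closure {A : Set B} {α : B} (hα : α ∉ A) {g : W}
    (hg : g ∈ Subgroup.closure (cs.simple '' A)) (v : B →₀ ℝ) : cs.geomRep g v α = v α := by
  induction hg using Subgroup.closure_induction generalizing v with
  | mem x hx =>
    obtain ⟨b, hb, rfl⟩ := hx
    have hbα : b ≠ α := fun h => hα (h ▸ hb)
    simp [geomRep_simple, M.geomReflection_apply, hbα]
  | one => simp
  | mul x y _ _ ihx ihy => rw [map_mul, Module.End.mul_apply, ihx, ihy]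
  | inv x _ ihx =>
    calc cs.geomRep x⁻¹ v α = cs.geomRep x (cs.geomRep x⁻¹ v) α := (ihx _).symm
      _ = v α := by
        rw [← Module.End.mul_apply, ← map_mul, mul_inv_cancel, map_one, Module.End.one_apply]

lemma simple_notMem_closure {A : Set B} {α : B} (hα : α ∉ A) :
    s α ∉ Subgroup.closure (cs.simple '' A) := by
  intro hmem
  have := cs.geomRep_apply_apply_of_mem_closure hα hmem (Finsupp.single α 1)
  simp [geomRep_simple, M.geomReflection_apply, M.geomCoeff_self] at this

lemma geomCoeff_ne_zero_of_not_commute {i j : B} (h : ¬Commute (s i) (s j)) :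
    M.geomCoeff i j ≠ 0 := fun h0 => h <| by
  have := cs.simple_mul_simple_pow i j
  rw [M.eq_two_of_geomCoeff_eq_zero h0, pow_two, mul_eq_one_iff_eq_inv, mul_inv_rev, inv_simple,
    inv_simple] at this
  exact this

lemma simple_mul_simple_mul_simple_notMem_closure {A : Set B} {α i : B} (hα : α ∉ A)
    (h : ¬Commute (s i) (s α)) : s α * s i * s α ∉ Subgroup.closure (cs.simple '' A) := by
  intro hmem
  have := cs.geomRep_apply_apply_of_mem_closure hα hmem (Finsupp.single α 1)
  have hc := cs.geomCoeff_ne_zero_of_not_commute h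
  have hiα : i ≠ α := fun hi => h (hi ▸ Commute.refl _)
  simp only [map_mul, Module.End.mul_apply, geomRep_simple, M.geomReflection_apply, map_sub,
    map_smul, M.geomFunctional_single, M.geomCoeff_self, M.geomCoeff_comm α i, smul_eq_mul,
    Finsupp.coe_sub, Finsupp.coe_smul, Pi.sub_apply, Pi.smul_apply, Finsupp.single_eq_same,
    Finsupp.single_eq_of_ne hiα.symm] at this
  exact hc (pow_eq_zero_iff two_ne_zero |>.1 (by linarith))

lemma length_lt_length_mul_simple_of_mem_closure {A : Set B} {α : B} (hα : α ∉ A) {w : W}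
    (hw : w ∈ Subgroup.closure (cs.simple '' A)) : ℓ w < ℓ (w * s α) := by
  by_contra! hle
  have hlt : ℓ (w * s α) < ℓ w := lt_of_le_of_ne hle (cs.length_mul_simple_ne w α)
  obtain ⟨ω, hωA, rfl⟩ := cs.exists_wordProd_eq_of_mem_closure hw
  obtain ⟨ω', hω', hprod⟩ := cs.exists_sublist_wordProd_eq_mul_simple hlt rfl
  refine cs.simple_notMem_closure hα ?_
  rw [show s α = (π ω)⁻¹ * π ω' by rw [hprod, inv_mul_cancel_left]]
  exact mul_mem (inv_mem hw) (cs.wordProd_mem_closure fun b hb => hωA b (hω'.subset hb))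

lemma length_mul_simple_lt_of_not_commute {A : Set B} {α i : B} (hα : α ∉ A) (hi : i ∈ A)
    (hc : ¬Commute (s i) (s α)) {w : W} (hw : w ∈ Subgroup.closure (cs.simple '' A)) :
    ℓ (w * s α) < ℓ (w * s α * s i) := by
  by_contra! hle
  have hlt : ℓ (w * s α * s i) < ℓ (w * s α) := lt_of_le_of_ne hle (cs.length_mul_simple_ne _ i)
  obtain ⟨ω, hωA, rfl⟩ := cs.exists_wordProd_eq_of_mem_closure hw
  obtain ⟨ω', hω', hprod⟩ := cs.exists_sublist_wordProd_eq_mul_simple hlt (cs.wordProd_concat α ω)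
  rw [List.concat_eq_append, List.sublist_append_iff] at hω'
  obtain ⟨ρ, τ, rfl, hρ, hτ⟩ := hω'
  have hρA := cs.wordProd_mem_closure fun b hb => hωA b (hρ.subset hb)
  rcases List.sublist_singleton.1 hτ with rfl | rfl
  · refine cs.simple_notMem_closure hα ?_
    rw [List.append_nil] at hprod
    rw [show s α = (π ω)⁻¹ * π ρ * s i by simp [hprod, mul_assoc]]
    exact mul_mem (mul_mem (inv_mem hw) hρA) (Subgroup.subset_closure ⟨i, hi, rfl⟩)
  · refine cs.simple_mul_simple_mul_simple_notMem_closure hα hc ?_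
    rw [wordProd_append, wordProd_singleton] at hprod
    rw [show s α * s i * s α = (π ω)⁻¹ * π ρ by
      rw [← cs.simple_mul_simple_cancel_right (w := π ρ) α, hprod]; group]
    exact mul_mem (inv_mem hw) hρA

end CoxeterSystem

theorem stmt3 {B W : Type*} [Group W] {M : CoxeterMatrix B}
    (cs : CoxeterSystem M W) (α : B)
    (w : W)
    (hw_mem : w ∈ Subgroup.closure (cs.simple '' {i : B | i ≠ α}))
    (hw_min : ∀ i : B, i ≠ α → Commute (cs.simple i) (cs.simple α) →
      cs.length w < cs.length (w * cs.simple i)) :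
    ∀ i : B, i ≠ α →
      cs.length (w * cs.simple α) < cs.length (w * cs.simple α * cs.simple i) := by
  intro i hi
  have hα : α ∉ {i : B | i ≠ α} := fun h => h rfl
  by_cases hc : Commute (cs.simple i) (cs.simple α)
  · have hwi := hw_min i hi hc
    have hwiα := cs.length_lt_length_mul_simple_of_mem_closure hα
      (mul_mem hw_mem (Subgroup.subset_closure ⟨i, hi, rfl⟩))
    have hwα := (cs.length_mul_le w (cs.simple α)).trans_eq (by rw [cs.length_simple])
    rw [mul_assoc, ← hc.eq, ← mul_assoc]
    rcases cs.length_mul_simple (w * cs.simple i) α with h | h <;> omega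
  · exact cs.length_mul_simple_lt_of_not_commute hα hi hc hw_mem
end

section
/- Let B^{2n}(r) ⊂ ℝ^{2n} be the open ball of radius r with the standard symplectic form. If there exists a tuple (f, g) realizing a symplectic embedding of B^{2n}(r) into B^{2n}(R) endowed with the standard symplectic form, then r ≤ R. Consequently, the Gromov width of the standard ball B^{2n}(R) is at most πR² (and equals πR²). -/
/-!
STATEMENT 17: If the open ball B^{2n}(r) ⊂ ℝ^{2n} (with the standard symplectic
form) embeds symplectically into B^{2n}(R), then r ≤ R.  Consequently the Gromov
width of the standard ball B^{2n}(R) equals πR² (in particular it is ≤ πR²).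
-/

open Sum

noncomputable section

/-- ℝ^{2n} with the Euclidean metric, coordinates (x₁,…,xₙ,y₁,…,yₙ). -/
abbrev R2n (n : ℕ) := EuclideanSpace ℝ (Fin n ⊕ Fin n)

/-- The standard symplectic form ω_st = Σ dxᵢ ∧ dyᵢ. -/
def stdOmegaR (n : ℕ) (u v : R2n n) : ℝ :=
  ∑ i : Fin n, (u (inl i) * v (inr i) - u (inr i) * v (inl i))

/-- `f` realizes a symplectic embedding of `B^{2n}(r)` into `B^{2n}(R)`:
it is injective and differentiable on the ball of radius `r`, maps it into the ball
of radius `R`, and its derivative preserves the standard symplectic form. -/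
def IsSymplecticEmbedding (n : ℕ) (f : R2n n → R2n n) (r R : ℝ) : Prop :=
  Set.InjOn f (Metric.ball 0 r) ∧
  (∀ x ∈ Metric.ball (0 : R2n n) r, f x ∈ Metric.ball (0 : R2n n) R) ∧
  (∀ x ∈ Metric.ball (0 : R2n n) r, DifferentiableAt ℝ f x ∧
    ∀ u v : R2n n, stdOmegaR n (fderiv ℝ f x u) (fderiv ℝ f x v) = stdOmegaR n u v)

/-!
The derivative of a symplectic embedding is a symplectic matrix at every point, hence has
determinant one, so by the change of variables formula the embedding preserves Lebesgue measure.
As the image of `B(r)` lies in `B(R)`, this gives `vol B(r) ≤ vol B(R)`, i.e. `r ≤ R`. The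
identity embeds `B(R)` into itself, so `πR²` is the largest capacity in the Gromov width.
-/

open Matrix WithLp

namespace Matrix

variable {ι l R : Type*} [Fintype ι] [DecidableEq ι] [Fintype l] [DecidableEq l] [CommRing R]

theorem eq_of_forall_dotProduct_mulVec_eq {M N : Matrix ι ι R}
    (h : ∀ u v, u ⬝ᵥ M *ᵥ v = u ⬝ᵥ N *ᵥ v) : M = N := by
  ext i j
  simpa using h (Pi.single i 1) (Pi.single j 1)

theorem mem_symplecticGroup_of_forall_dotProduct_J {A : Matrix (l ⊕ l) (l ⊕ l) R}
    (hA : ∀ u v, (A *ᵥ u) ⬝ᵥ J l R *ᵥ (A *ᵥ v) = u ⬝ᵥ J l R *ᵥ v) :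
    A ∈ symplecticGroup l R := by
  rw [SymplecticGroup.mem_iff']
  refine eq_of_forall_dotProduct_mulVec_eq fun u v => ?_
  rw [← hA, ← mulVec_mulVec, ← mulVec_mulVec, dotProduct_mulVec, vecMul_transpose]

end Matrix

theorem LinearMap.det_eq_one_of_forall_dotProduct_J {l R : Type*} [Fintype l] [DecidableEq l]
    [CommRing R] (p : ENNReal) (f : Module.End R (WithLp p (l ⊕ l → R)))
    (hf : ∀ u v, ofLp (f u) ⬝ᵥ J l R *ᵥ ofLp (f v) = ofLp u ⬝ᵥ J l R *ᵥ ofLp v) :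
    f.det = 1 := by
  obtain ⟨M, rfl⟩ := (toLpLin p p).surjective f
  rw [LinearMap.det_toLpLin]
  refine SymplecticGroup.det_eq_one (mem_symplecticGroup_of_forall_dotProduct_J fun u v => ?_)
  simpa using hf (toLp p u) (toLp p v)

-- Mathlib's `J` is `fromBlocks 0 (-1) 1 0`, the negative of the Gram matrix of `stdOmegaR`.
theorem stdOmegaR_eq_neg_dotProduct_J (n : ℕ) (u v : R2n n) :
    stdOmegaR n u v = -(ofLp u ⬝ᵥ J (Fin n) ℝ *ᵥ ofLp v) := by
  simp [stdOmegaR, J, dotProduct, Fintype.sum_sum_type, fromBlocks_mulVec, neg_mulVec,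
    Finset.sum_sub_distrib]
  ring

theorem ContinuousLinearMap.det_eq_one_of_forall_stdOmegaR_eq {n : ℕ} (A : R2n n →L[ℝ] R2n n)
    (hA : ∀ u v, stdOmegaR n (A u) (A v) = stdOmegaR n u v) : A.det = 1 :=
  LinearMap.det_eq_one_of_forall_dotProduct_J 2 (A : Module.End ℝ (R2n n)) fun u v => by
    simpa [stdOmegaR_eq_neg_dotProduct_J] using hA u v

open MeasureTheory Metric

section Volume

variable {E : Type*} [NormedAddCommGroup E] [NormedSpace ℝ E] [FiniteDimensional ℝ E]
  [MeasurableSpace E] [BorelSpace E] (μ : Measure E) [μ.IsAddHaarMeasure]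

theorem addHaar_image_eq_of_abs_det_fderiv_eq_one {s : Set E} {f : E → E}
    {f' : E → E →L[ℝ] E} (hs : MeasurableSet s) (hf' : ∀ x ∈ s, HasFDerivWithinAt f (f' x) s x)
    (hf : Set.InjOn f s)
    (hdet : ∀ x ∈ s, |(f' x).det| = 1) : μ (f '' s) = μ s := by
  rw [← lintegral_abs_det_fderiv_eq_addHaar_image μ hs hf' hf,
    setLIntegral_congr_fun hs fun x hx => by rw [hdet x hx, ENNReal.ofReal_one]]
  simp

theorem le_of_addHaar_ball_le_addHaar_ball [Nontrivial E] {x y : E} {r R : ℝ} (hr : 0 ≤ r)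
    (hR : 0 ≤ R) (h : μ (ball x r) ≤ μ (ball y R)) : r ≤ R := by
  rw [Measure.addHaar_ball μ x hr, Measure.addHaar_ball μ y hR,
    ENNReal.mul_le_mul_iff_left (measure_ball_pos μ 0 one_pos).ne' measure_ball_lt_top.ne,
    ENNReal.ofReal_le_ofReal_iff (by positivity)] at h
  exact (pow_le_pow_iff_left₀ hr hR Module.finrank_pos.ne').mp h

end Volume

theorem IsSymplecticEmbedding.radius_le {n : ℕ} {f : R2n n → R2n n} {r R : ℝ} (hn : 0 < n)
    (hr : 0 < r) (hf : IsSymplecticEmbedding n f r R) : r ≤ R := by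
  obtain ⟨hinj, hmaps, hsymp⟩ := hf
  have : Nonempty (Fin n) := ⟨⟨0, hn⟩⟩
  have hR : 0 < R := (norm_nonneg _).trans_lt (by simpa using hmaps 0 (mem_ball_self hr))
  have hvol : volume (f '' ball 0 r) = volume (ball (0 : R2n n) r) :=
    addHaar_image_eq_of_abs_det_fderiv_eq_one volume measurableSet_ball
      (fun x hx => (hsymp x hx).1.hasFDerivAt.hasFDerivWithinAt) hinj fun x hx => by
        rw [(fderiv ℝ f x).det_eq_one_of_forall_stdOmegaR_eq (hsymp x hx).2, abs_one]
  have hle : volume (ball (0 : R2n n) r) ≤ volume (ball (0 : R2n n) R) :=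
    hvol ▸ measure_mono (Set.image_subset_iff.mpr hmaps)
  exact le_of_addHaar_ball_le_addHaar_ball volume hr.le hR.le hle

theorem isSymplecticEmbedding_id (n : ℕ) (R : ℝ) : IsSymplecticEmbedding n id R R :=
  ⟨Set.injOn_id _, fun _ hx => hx, fun _ _ => ⟨differentiableAt_id, by simp⟩⟩

theorem stmt17_general (n : ℕ) (hn : 0 < n) (r R : ℝ) (hr : 0 < r)
    (hemb : ∃ f : R2n n → R2n n, IsSymplecticEmbedding n f r R) :
    r ≤ R ∧
    sSup {A : ℝ | ∃ ρ : ℝ, 0 < ρ ∧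
        (∃ f : R2n n → R2n n, IsSymplecticEmbedding n f ρ R) ∧
        A = Real.pi * ρ ^ 2}
      = Real.pi * R ^ 2 := by
  obtain ⟨f, hf⟩ := hemb
  have hrR : r ≤ R := hf.radius_le hn hr
  refine ⟨hrR, IsGreatest.csSup_eq
    ⟨⟨R, hr.trans_le hrR, ⟨id, isSymplecticEmbedding_id n R⟩, rfl⟩, ?_⟩⟩
  rintro _ ⟨ρ, hρ, ⟨g, hg⟩, rfl⟩
  have hρR := hg.radius_le hn hρ
  gcongr

theorem stmt17 (n : ℕ) (hn : 0 < n) (r R : ℝ) (hr : 0 < r) (hR : 0 < R)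
    (hemb : ∃ f : R2n n → R2n n, IsSymplecticEmbedding n f r R) :
    r ≤ R ∧
    sSup {A : ℝ | ∃ ρ : ℝ, 0 < ρ ∧
        (∃ f : R2n n → R2n n, IsSymplecticEmbedding n f ρ R) ∧
        A = Real.pi * ρ ^ 2}
      = Real.pi * R ^ 2 :=
  stmt17_general n hn r R hr hemb

end
end
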